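/- Assume the forms S_n pre-converge to S. Let w_n ∈ D(S_n) ∩ 𝓒 w-converge to w ∈ L²(E, ν) with sup_n ⟨A_n w_n, A_n w_n⟩_n < ∞, and let v_n ∈ D(S_n) ∩ 𝓒 s-converge to v ∈ D(S) in the sense of (ii) of pre-convergence (i.e. with sup_n ⟨A_n v_n, A_n v_n⟩_n < ∞ and limsup_n S_n(v_n, v_n) ≤ S(v, v)). Let β > 0 and suppose limsup_n S_{n,β}(w_n, w_n) < ∞. Then w ∈ D(S) and lim_{n→∞} (S_{n,β}(v_n, w_n) + S_{n,β}(w_n, v_n)) = S_β(v, w) + S_β(w, v). -/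

import Mathlib

open MeasureTheory Filter Topology

noncomputable section

namespace Mosco

variable {E : Type*} [MeasurableSpace E]

/-- The inner product of two real-valued functions with respect to a measure,
`⟨φ, ψ⟩ = ∫ φ ψ dμ`. -/
def ip (μ : Measure E) (φ ψ : E → ℝ) : ℝ := ∫ x, φ x * ψ x ∂μ

/-- The framework of Section 2.1: mutually singular probability measures `ν n`, `n : ℕ`
(`ν 0` playing the role of the limit measure `ν`), such that `L²(E, ν 0)` is separable,
together with disjoint sets `En n` carrying `ν n`, and a linear subset `F = 𝓕 ⊆ 𝓓`
which is dense in `L²(E, ν 0)`. -/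
structure Frame (E : Type*) [MeasurableSpace E] where
  ν : ℕ → Measure E
  prob : ∀ n, IsProbabilityMeasure (ν n)
  singular : ∀ m n, m ≠ n → (ν m).MutuallySingular (ν n)
  separableL2 : TopologicalSpace.SeparableSpace (Lp ℝ 2 (ν 0))
  En : ℕ → Set E
  measEn : ∀ n, MeasurableSet (En n)
  disjEn : ∀ m n, m ≠ n → Disjoint (En m) (En n)
  nullEn : ∀ n, ν n (En n)ᶜ = 0
  F : Set (E → ℝ)
  F_measurable : ∀ φ ∈ F, Measurable φ
  F_memL2 : ∀ φ ∈ F, ∀ n, MemLp φ 2 (ν n)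
  F_tendsto : ∀ φ ∈ F, Tendsto (fun n => ip (ν n) φ φ) atTop (𝓝 (ip (ν 0) φ φ))
  F_linear : ∀ φ ∈ F, ∀ ψ ∈ F, ∀ a b : ℝ, (fun x => a * φ x + b * ψ x) ∈ F
  F_dense : ∀ f : E → ℝ, Measurable f → MemLp f 2 (ν 0) → ∀ ε : ℝ, 0 < ε →
    ∃ φ ∈ F, ip (ν 0) (fun x => f x - φ x) (fun x => f x - φ x) < ε

/-- The set `𝓓`: everywhere defined measurable functions lying in every `L²(E, ν n)`
whose `ν n`-norms converge to the `ν 0`-norm. -/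
def Frame.D (fr : Frame E) : Set (E → ℝ) :=
  {φ | Measurable φ ∧ (∀ n, MemLp φ 2 (fr.ν n)) ∧
    Tendsto (fun n => ip (fr.ν n) φ φ) atTop (𝓝 (ip (fr.ν 0) φ φ))}

/-- The set `𝓒`: elements of `𝓓` satisfying conditions (c1) and (c2). -/
def Frame.C (fr : Frame E) : Set (E → ℝ) :=
  {φ | φ ∈ fr.D ∧ (∀ n, 1 ≤ n → ∃ g ∈ fr.F, φ =ᵐ[fr.ν n] g) ∧
    ∀ ψ ∈ fr.F, Tendsto (fun n => ip (fr.ν n) φ ψ) atTop (𝓝 (ip (fr.ν 0) φ ψ))}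

/-- The set `𝓥` of multipliers mapping `𝓓` into `𝓓` and `𝓕` into `𝓕`. -/
def Frame.V (fr : Frame E) : Set (E → ℝ) :=
  {ψ | Measurable ψ ∧ (∀ n, MemLp ψ 2 (fr.ν n)) ∧
    (∀ σ ∈ fr.D, (fun x => σ x * ψ x) ∈ fr.D) ∧
    (∀ τ ∈ fr.F, (fun x => τ x * ψ x) ∈ fr.F)}

/-- `w`-convergence of a sequence `φs` (with `φs n` regarded as an element of
`L²(E, ν n)`) to `φ ∈ L²(E, ν 0)`. -/
def Frame.WConv (fr : Frame E) (φs : ℕ → E → ℝ) (φ : E → ℝ) : Prop :=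
  ∀ ψ ∈ fr.C, Tendsto (fun n => ip (fr.ν n) (φs n) ψ) atTop (𝓝 (ip (fr.ν 0) φ ψ))

/-- `s`-convergence: `w`-convergence together with convergence of the norms. -/
def Frame.SConv (fr : Frame E) (φs : ℕ → E → ℝ) (φ : E → ℝ) : Prop :=
  fr.WConv φs φ ∧
  Tendsto (fun n => ip (fr.ν n) (φs n) (φs n)) atTop (𝓝 (ip (fr.ν 0) φ φ))

open Classical

/-- The `L²(μ)`-class of a function (zero if the function is not square-integrable). -/
def toL2 (μ : Measure E) (φ : E → ℝ) : Lp ℝ 2 μ :=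
  if h : MemLp φ 2 μ then h.toLp φ else 0

/-- A strongly continuous semigroup of bounded linear operators on `L²(E, μ)`. -/
structure Semigroup2 {E : Type*} [MeasurableSpace E] (μ : Measure E) where
  T : ℝ → Lp ℝ 2 μ →L[ℝ] Lp ℝ 2 μ
  T_zero : T 0 = ContinuousLinearMap.id ℝ (Lp ℝ 2 μ)
  T_add : ∀ s t : ℝ, 0 ≤ s → 0 ≤ t → T (s + t) = (T s).comp (T t)
  strongCont : ∀ f : Lp ℝ 2 μ, Tendsto (fun t => T t f) (𝓝[≥] (0:ℝ)) (𝓝 f)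

namespace Semigroup2

variable {μ : Measure E}

/-- The semigroup is a contraction semigroup. -/
def IsContraction (sg : Semigroup2 μ) : Prop := ∀ t : ℝ, 0 ≤ t → ‖sg.T t‖ ≤ 1

/-- The adjoint (dual) semigroup `T'`. -/
def dual (sg : Semigroup2 μ) (t : ℝ) : Lp ℝ 2 μ →L[ℝ] Lp ℝ 2 μ :=
  ContinuousLinearMap.adjoint (sg.T t)

/-- Membership in the domain `D(A)` of the generator. -/
def memDom (sg : Semigroup2 μ) (f : Lp ℝ 2 μ) : Prop :=
  ∃ g : Lp ℝ 2 μ, Tendsto (fun t : ℝ => t⁻¹ • (sg.T t f - f)) (𝓝[>] (0:ℝ)) (𝓝 g)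

/-- The generator `A` (zero off its domain). -/
def gen (sg : Semigroup2 μ) (f : Lp ℝ 2 μ) : Lp ℝ 2 μ :=
  if h : sg.memDom f then Exists.choose h else 0

/-- Membership in the domain `D(A')` of the adjoint generator. -/
def memDom' (sg : Semigroup2 μ) (f : Lp ℝ 2 μ) : Prop :=
  ∃ g : Lp ℝ 2 μ, Tendsto (fun t : ℝ => t⁻¹ • (sg.dual t f - f)) (𝓝[>] (0:ℝ)) (𝓝 g)

/-- The adjoint generator `A'` (zero off its domain). -/
def gen' (sg : Semigroup2 μ) (f : Lp ℝ 2 μ) : Lp ℝ 2 μ :=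
  if h : sg.memDom' f then Exists.choose h else 0

/-- The resolvent `G_β = (β - A)⁻¹ = ∫_0^∞ e^{-βt} T_t dt`. -/
def res (sg : Semigroup2 μ) (β : ℝ) (f : Lp ℝ 2 μ) : Lp ℝ 2 μ :=
  ∫ t in Set.Ioi (0:ℝ), Real.exp (-β * t) • sg.T t f

/-- The adjoint resolvent `G'_β`. -/
def res' (sg : Semigroup2 μ) (β : ℝ) (f : Lp ℝ 2 μ) : Lp ℝ 2 μ :=
  ∫ t in Set.Ioi (0:ℝ), Real.exp (-β * t) • sg.dual t f

/-- `u ∈ D(A) = D(S)`, at the level of functions. -/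
def memD (sg : Semigroup2 μ) (u : E → ℝ) : Prop := sg.memDom (toL2 μ u)

/-- `u ∈ D(A')`, at the level of functions. -/
def memD' (sg : Semigroup2 μ) (u : E → ℝ) : Prop := sg.memDom' (toL2 μ u)

/-- `A u`, at the level of functions. -/
def Af (sg : Semigroup2 μ) (u : E → ℝ) : E → ℝ := sg.gen (toL2 μ u)

/-- `A' u`, at the level of functions. -/
def Af' (sg : Semigroup2 μ) (u : E → ℝ) : E → ℝ := sg.gen' (toL2 μ u)

/-- `G_β u`, at the level of functions. -/
def Res (sg : Semigroup2 μ) (β : ℝ) (u : E → ℝ) : E → ℝ := sg.res β (toL2 μ u)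

/-- `G'_β u`, at the level of functions. -/
def Res' (sg : Semigroup2 μ) (β : ℝ) (u : E → ℝ) : E → ℝ := sg.res' β (toL2 μ u)

/-- `T_t u`, at the level of functions. -/
def Tf (sg : Semigroup2 μ) (t : ℝ) (u : E → ℝ) : E → ℝ := sg.T t (toL2 μ u)

/-- `T'_t u`, at the level of functions. -/
def Tf' (sg : Semigroup2 μ) (t : ℝ) (u : E → ℝ) : E → ℝ := sg.dual t (toL2 μ u)

/-- The bilinear form `S(u, v) = ⟨-A u, v⟩` associated with the semigroup. -/
def S (sg : Semigroup2 μ) (u v : E → ℝ) : ℝ := ip μ (fun x => -(sg.Af u x)) v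

/-- `S_β(u, v) = β ⟨u, v⟩ + S(u, v)`. -/
def Sb (sg : Semigroup2 μ) (β : ℝ) (u v : E → ℝ) : ℝ := β * ip μ u v + sg.S u v

end Semigroup2

/-- Definition 2.4 (i) and (ii): the forms `S n` pre-converge to `S 0`.
Here `sg n` is the semigroup on `L²(E, ν n)` and `sg 0` the limiting one. -/
def PreConv (fr : Frame E) (sg : ∀ n, Semigroup2 (fr.ν n)) : Prop :=
  (∀ φ : E → ℝ, Measurable φ → MemLp φ 2 (fr.ν 0) →
    ∀ nk : ℕ → ℕ, StrictMono nk →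
    ∀ φk : ℕ → E → ℝ, (∀ k, φk k ∈ fr.C ∧ (sg (nk k)).memD (φk k)) →
    (∀ ψ ∈ fr.C, Tendsto (fun k => ip (fr.ν (nk k)) (φk k) ψ)
      atTop (𝓝 (ip (fr.ν 0) φ ψ))) →
    (∃ M : ℝ, ∀ k, ip (fr.ν (nk k)) ((sg (nk k)).Af (φk k)) ((sg (nk k)).Af (φk k)) ≤ M) →
    (sg 0).memD φ ∧
      (sg 0).S φ φ ≤ liminf (fun k => (sg (nk k)).S (φk k) (φk k)) atTop) ∧
  (∀ ψ : E → ℝ, Measurable ψ → MemLp ψ 2 (fr.ν 0) → (sg 0).memD ψ →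
    ∃ ψs : ℕ → E → ℝ, (∀ n, ψs n ∈ fr.C ∧ (sg n).memD (ψs n)) ∧
      fr.SConv ψs ψ ∧
      (∃ M : ℝ, ∀ n, ip (fr.ν n) ((sg n).Af (ψs n)) ((sg n).Af (ψs n)) ≤ M) ∧
      limsup (fun n => (sg n).S (ψs n) (ψs n)) atTop ≤ (sg 0).S ψ ψ)

/-- Condition (iii) of Definition 2.4. -/
def CondIII (fr : Frame E) (sg : ∀ n, Semigroup2 (fr.ν n)) : Prop :=
  ∀ β : ℝ, 0 < β →
  ∀ u : E → ℝ, Measurable u → MemLp u 2 (fr.ν 0) → (sg 0).memD u →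
  ∀ us : ℕ → E → ℝ,
    (∀ n, us n ∈ fr.C ∧ (sg n).memD (us n) ∧ ∃ c ∈ fr.C, (sg n).Af (us n) =ᵐ[fr.ν n] c) →
    (∃ w : E → ℝ, Measurable w ∧ MemLp w 2 (fr.ν 0) ∧ fr.WConv us w) →
    (∃ M : ℝ, ∀ n, ip (fr.ν n) ((sg n).Af (us n)) ((sg n).Af (us n)) ≤ M) →
    (∀ ψ ∈ fr.C, ∀ ψs : ℕ → E → ℝ, (∀ n, ψs n ∈ fr.C) → fr.SConv ψs ψ →
      Tendsto (fun n => (sg n).Sb β (us n) (ψs n)) atTop (𝓝 ((sg 0).Sb β u ψ))) →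
    ∀ ψ : E → ℝ, Measurable ψ → MemLp ψ 2 (fr.ν 0) → (sg 0).memD ψ →
    ∀ ψs : ℕ → E → ℝ, (∀ n, ψs n ∈ fr.C ∧ (sg n).memD (ψs n)) → fr.SConv ψs ψ →
      (∃ M : ℝ, ∀ n, ip (fr.ν n) ((sg n).Af (ψs n)) ((sg n).Af (ψs n)) ≤ M) →
      limsup (fun n => (sg n).S (ψs n) (ψs n)) atTop ≤ (sg 0).S ψ ψ →
      Tendsto (fun n => (sg n).Sb β (ψs n) (us n)) atTop (𝓝 ((sg 0).Sb β ψ u))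

/-- Condition (iv) of Lemma 2.6. -/
def CondIV (fr : Frame E) (sg : ∀ n, Semigroup2 (fr.ν n)) : Prop :=
  ∀ β : ℝ, 0 < β →
  ∀ u : E → ℝ, Measurable u → MemLp u 2 (fr.ν 0) → (sg 0).memD u →
  ∀ us : ℕ → E → ℝ,
    (∀ n, us n ∈ fr.C ∧ (sg n).memD (us n) ∧ ∃ c ∈ fr.C, (sg n).Af (us n) =ᵐ[fr.ν n] c) →
    (∃ w : E → ℝ, Measurable w ∧ MemLp w 2 (fr.ν 0) ∧ fr.WConv us w) →
    (∃ M : ℝ, ∀ n, ip (fr.ν n) ((sg n).Af (us n)) ((sg n).Af (us n)) ≤ M) →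
    fr.WConv (fun n x => β * us n x - (sg n).Af (us n) x)
      (fun x => β * u x - (sg 0).Af u x) →
    fr.WConv us u

/-- The forms converge: pre-convergence together with condition (iii). -/
def Conv (fr : Frame E) (sg : ∀ n, Semigroup2 (fr.ν n)) : Prop :=
  PreConv fr sg ∧ CondIII fr sg

/-- Condition (c3): resolvents and adjoint resolvents of elements of `𝓒`
coincide a.e. with elements of `𝓒`. -/
def CondC3 (fr : Frame E) (sg : ∀ n, Semigroup2 (fr.ν n)) : Prop :=
  ∀ g ∈ fr.C, ∀ β : ℝ, 0 < β →
    (∃ u ∈ fr.C, (sg 0).Res β g =ᵐ[fr.ν 0] u) ∧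
    (∀ n, 1 ≤ n → ∃ u ∈ fr.C, (sg n).Res β g =ᵐ[fr.ν n] u) ∧
    (∃ u ∈ fr.C, (sg 0).Res' β g =ᵐ[fr.ν 0] u) ∧
    (∀ n, 1 ≤ n → ∃ u ∈ fr.C, (sg n).Res' β g =ᵐ[fr.ν n] u)

/-- Condition (c4): `D(S) ⊆ 𝓒` and `A(D(S)) ⊆ 𝓒`, up to `ν 0`-a.e. equality. -/
def CondC4 (fr : Frame E) (sg : ∀ n, Semigroup2 (fr.ν n)) : Prop :=
  ∀ φ : E → ℝ, Measurable φ → MemLp φ 2 (fr.ν 0) → (sg 0).memD φ →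
    (∃ u ∈ fr.C, φ =ᵐ[fr.ν 0] u) ∧ (∃ u ∈ fr.C, (sg 0).Af φ =ᵐ[fr.ν 0] u)

/-- Condition (c5): semigroups and adjoint semigroups applied to elements of `𝓒`
coincide a.e. with elements of `𝓒`. -/
def CondC5 (fr : Frame E) (sg : ∀ n, Semigroup2 (fr.ν n)) : Prop :=
  ∀ g ∈ fr.C, ∀ t : ℝ, 0 ≤ t →
    (∃ u ∈ fr.C, (sg 0).Tf t g =ᵐ[fr.ν 0] u) ∧
    (∀ n, 1 ≤ n → ∃ u ∈ fr.C, (sg n).Tf t g =ᵐ[fr.ν n] u) ∧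
    (∃ u ∈ fr.C, (sg 0).Tf' t g =ᵐ[fr.ν 0] u) ∧
    (∀ n, 1 ≤ n → ∃ u ∈ fr.C, (sg n).Tf' t g =ᵐ[fr.ν n] u)

/-!
`w ∈ D(S)` is part (i) of pre-convergence applied to `wₙ` itself. For the limit, write
`S_{n,β}(vₙ, wₙ) + S_{n,β}(wₙ, vₙ) = 2β ⟨wₙ, vₙ⟩ₙ + dₙ` with `dₙ = Sₙ(wₙ, vₙ) + Sₙ(vₙ, wₙ)`.
Contractivity gives `Sₙ(u, u) ≥ 0`, so `β ⟨wₙ, wₙ⟩ₙ ≤ S_{n,β}(wₙ, wₙ)` is bounded; then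
`⟨wₙ, vₙ⟩ₙ → ⟨w, v⟩` because `vₙ` is approximated by a single `ψ ∈ 𝓕`, uniformly in large `n`.
For `dₙ`, part (i) applied to `wₙ + t vₙ` gives, for every real `t`,
`S(w, w) + t d + t² S(v, v) ≤ liminf (Sₙ(wₙ, wₙ) + t dₙ + t² Sₙ(vₙ, vₙ))` with
`d = S(w, v) + S(v, w)`, while `Sₙ(vₙ, vₙ) → S(v, v)` and `Sₙ(wₙ, wₙ)` is bounded above;
letting `t → ±∞` squeezes `dₙ` to `d`.
-/

lemma tendsto_of_quadratic_le_liminf {ι : Type*} {l : Filter ι} {a d c : ι → ℝ} {A D C : ℝ}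
    (ha : IsBoundedUnder (· ≤ ·) l a) (hc : Tendsto c l (𝓝 C))
    (hbdd : ∀ t : ℝ, IsBoundedUnder (· ≥ ·) l fun i => a i + t * d i + t ^ 2 * c i)
    (hle : ∀ t : ℝ, A + t * D + t ^ 2 * C ≤ liminf (fun i => a i + t * d i + t ^ 2 * c i) l) :
    Tendsto d l (𝓝 D) := by
  obtain ⟨K, hK⟩ := ha.eventually_le
  set R := |A - K - 1| + 1
  have hR : 0 < R := by positivity
  -- `t² cᵢ` cancels against `t² C` in the limit, leaving a bound linear in `t`
  have key : ∀ t, ∀ᶠ i in l, -R < t * (d i - D) := fun t => by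
    have hlow := eventually_lt_of_lt_liminf ((sub_lt_self _ one_half_pos).trans_le (hle t)) (hbdd t)
    have hup := (hc.const_mul (t ^ 2)).eventually_lt_const (lt_add_of_pos_right _ one_half_pos)
    filter_upwards [hlow, hup, hK] with i hlow hup hKi
    linarith [neg_abs_le (A - K - 1)]
  rw [tendsto_order]
  constructor
  · intro y hy
    filter_upwards [key (R / (D - y))] with i hi
    by_contra! hdi
    have : R / (D - y) * (d i - D) ≤ -R := by
      rw [div_mul_eq_mul_div, div_le_iff₀ (sub_pos.2 hy)]
      nlinarith
    linarith
  · intro y hy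
    filter_upwards [key (-R / (y - D))] with i hi
    by_contra! hdi
    have : -R / (y - D) * (d i - D) ≤ -R := by
      rw [div_mul_eq_mul_div, div_le_iff₀ (sub_pos.2 hy)]
      nlinarith
    linarith

section InnerProduct

variable {μ : Measure E} {f g h : E → ℝ}

lemma memLp_add_mul {p : ENNReal} (hf : MemLp f p μ) (hg : MemLp g p μ) (c : ℝ) :
    MemLp (fun x => f x + c * g x) p μ :=
  hf.add (hg.const_smul c)

lemma memLp_sub {p : ENNReal} (hf : MemLp f p μ) (hg : MemLp g p μ) :
    MemLp (fun x => f x - g x) p μ :=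
  hf.sub hg

lemma toL2_of_memLp (hf : MemLp f 2 μ) : toL2 μ f = hf.toLp f := dif_pos hf

lemma toL2_coeFn (F : Lp ℝ 2 μ) : toL2 μ F = F := by
  rw [toL2_of_memLp (Lp.memLp F), Lp.toLp_coeFn]

lemma ip_eq_inner (hf : MemLp f 2 μ) (hg : MemLp g 2 μ) :
    ip μ f g = inner ℝ (toL2 μ f) (toL2 μ g) := by
  rw [toL2_of_memLp hf, toL2_of_memLp hg, L2.inner_def]
  refine integral_congr_ae ?_
  filter_upwards [hf.coeFn_toLp, hg.coeFn_toLp] with x hfx hgx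
  simp [hfx, hgx, mul_comm]

lemma toL2_add_mul (hf : MemLp f 2 μ) (hg : MemLp g 2 μ) (c : ℝ) :
    toL2 μ (fun x => f x + c * g x) = toL2 μ f + c • toL2 μ g := by
  rw [toL2_of_memLp hf, toL2_of_memLp hg, ← MemLp.toLp_const_smul, ← MemLp.toLp_add,
    toL2_of_memLp (memLp_add_mul hf hg c)]
  rfl

lemma toL2_sub (hf : MemLp f 2 μ) (hg : MemLp g 2 μ) :
    toL2 μ (fun x => f x - g x) = toL2 μ f - toL2 μ g := by
  rw [toL2_of_memLp hf, toL2_of_memLp hg, ← MemLp.toLp_sub, toL2_of_memLp (memLp_sub hf hg)]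
  rfl

lemma ip_comm (f g : E → ℝ) : ip μ f g = ip μ g f := by
  simp only [ip, mul_comm]

lemma ip_self_eq_norm_sq (hf : MemLp f 2 μ) : ip μ f f = ‖toL2 μ f‖ ^ 2 := by
  rw [ip_eq_inner hf hf, real_inner_self_eq_norm_sq]

lemma ip_self_nonneg (hf : MemLp f 2 μ) : 0 ≤ ip μ f f := by
  rw [ip_self_eq_norm_sq hf]
  positivity

lemma ip_add_mul_left (hf : MemLp f 2 μ) (hg : MemLp g 2 μ) (hh : MemLp h 2 μ) (c : ℝ) :
    ip μ (fun x => f x + c * g x) h = ip μ f h + c * ip μ g h := by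
  rw [ip_eq_inner (memLp_add_mul hf hg c) hh, toL2_add_mul hf hg, inner_add_left,
    real_inner_smul_left, ip_eq_inner hf hh, ip_eq_inner hg hh]

lemma ip_add_mul_self (hf : MemLp f 2 μ) (hg : MemLp g 2 μ) (c : ℝ) :
    ip μ (fun x => f x + c * g x) (fun x => f x + c * g x)
      = ip μ f f + 2 * c * ip μ f g + c ^ 2 * ip μ g g := by
  rw [ip_add_mul_left hf hg (memLp_add_mul hf hg c), ip_comm f, ip_comm g, ip_add_mul_left hf hg hf,
    ip_add_mul_left hf hg hg, ip_comm g f]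
  ring

lemma ip_sub_self (hf : MemLp f 2 μ) (hg : MemLp g 2 μ) :
    ip μ (fun x => f x - g x) (fun x => f x - g x) = ip μ f f - 2 * ip μ f g + ip μ g g := by
  rw [ip_eq_inner (memLp_sub hf hg) (memLp_sub hf hg), toL2_sub hf hg, real_inner_self_eq_norm_sq,
    norm_sub_sq_real, ip_self_eq_norm_sq hf, ip_self_eq_norm_sq hg, ip_eq_inner hf hg]

lemma abs_ip_sub_le (hf : MemLp f 2 μ) (hg : MemLp g 2 μ) (hh : MemLp h 2 μ) :
    |ip μ f g - ip μ f h| ≤ √(ip μ f f) * √(ip μ (fun x => g x - h x) (fun x => g x - h x)) := by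
  rw [ip_self_eq_norm_sq hf, ip_self_eq_norm_sq (memLp_sub hg hh), Real.sqrt_sq (norm_nonneg _),
    Real.sqrt_sq (norm_nonneg _), ip_eq_inner hf hg, ip_eq_inner hf hh, ← inner_sub_right,
    toL2_sub hg hh]
  exact abs_real_inner_le_norm _ _

end InnerProduct

namespace Semigroup2

variable {μ : Measure E} (sg : Semigroup2 μ)

lemma tendsto_gen {f : Lp ℝ 2 μ} (hf : sg.memDom f) :
    Tendsto (fun t : ℝ => t⁻¹ • (sg.T t f - f)) (𝓝[>] 0) (𝓝 (sg.gen f)) := by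
  rw [gen, dif_pos hf]
  exact hf.choose_spec

lemma tendsto_gen_add_smul {f g : Lp ℝ 2 μ} (hf : sg.memDom f) (hg : sg.memDom g) (c : ℝ) :
    Tendsto (fun t : ℝ => t⁻¹ • (sg.T t (f + c • g) - (f + c • g))) (𝓝[>] 0)
      (𝓝 (sg.gen f + c • sg.gen g)) := by
  refine ((sg.tendsto_gen hf).add ((sg.tendsto_gen hg).const_smul c)).congr fun t => ?_
  rw [map_add, map_smul, smul_comm c t⁻¹, ← smul_add, smul_sub c]
  congr 1
  abel

lemma memDom_add_smul {f g : Lp ℝ 2 μ} (hf : sg.memDom f) (hg : sg.memDom g) (c : ℝ) :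
    sg.memDom (f + c • g) :=
  ⟨_, sg.tendsto_gen_add_smul hf hg c⟩

lemma gen_add_smul {f g : Lp ℝ 2 μ} (hf : sg.memDom f) (hg : sg.memDom g) (c : ℝ) :
    sg.gen (f + c • g) = sg.gen f + c • sg.gen g :=
  tendsto_nhds_unique (sg.tendsto_gen (sg.memDom_add_smul hf hg c))
    (sg.tendsto_gen_add_smul hf hg c)

lemma inner_gen_self_nonpos (hc : sg.IsContraction) {f : Lp ℝ 2 μ} (hf : sg.memDom f) :
    inner ℝ (sg.gen f) f ≤ 0 := by
  refine le_of_tendsto ((sg.tendsto_gen hf).inner tendsto_const_nhds) ?_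
  filter_upwards [self_mem_nhdsWithin] with t (ht : 0 < t)
  have hTf : inner ℝ (sg.T t f) f ≤ ‖f‖ ^ 2 :=
    calc inner ℝ (sg.T t f) f ≤ ‖sg.T t f‖ * ‖f‖ := real_inner_le_norm _ _
    _ ≤ ‖f‖ * ‖f‖ := by
        gcongr
        simpa using (sg.T t).le_of_opNorm_le (hc t ht.le) f
    _ = ‖f‖ ^ 2 := by ring
  rw [real_inner_smul_left, inner_sub_left, real_inner_self_eq_norm_sq]
  exact mul_nonpos_of_nonneg_of_nonpos (inv_nonneg.mpr ht.le) (by linarith)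

lemma memD_add_mul {u v : E → ℝ} (hu : MemLp u 2 μ) (hv : MemLp v 2 μ)
    (huD : sg.memD u) (hvD : sg.memD v) (c : ℝ) : sg.memD (fun x => u x + c * v x) := by
  rw [memD, toL2_add_mul hu hv]
  exact sg.memDom_add_smul huD hvD c

lemma S_eq_neg_inner (u : E → ℝ) {ψ : E → ℝ} (hψ : MemLp ψ 2 μ) :
    sg.S u ψ = -inner ℝ (sg.gen (toL2 μ u)) (toL2 μ ψ) := by
  have hA : MemLp (sg.Af u) 2 μ := Lp.memLp _
  have hneg : sg.S u ψ = -ip μ (sg.Af u) ψ := by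
    simp only [S, ip, neg_mul, integral_neg]
  rw [hneg, ip_eq_inner hA hψ, Af, toL2_coeFn]

lemma ip_Af_self (u : E → ℝ) : ip μ (sg.Af u) (sg.Af u) = ‖sg.gen (toL2 μ u)‖ ^ 2 := by
  rw [Af, ip_self_eq_norm_sq (Lp.memLp _), toL2_coeFn]

lemma S_self_nonneg (hc : sg.IsContraction) {u : E → ℝ} (hu : MemLp u 2 μ) (huD : sg.memD u) :
    0 ≤ sg.S u u := by
  rw [sg.S_eq_neg_inner u hu, neg_nonneg]
  exact sg.inner_gen_self_nonpos hc huD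

lemma abs_S_le (u : E → ℝ) {ψ : E → ℝ} (hψ : MemLp ψ 2 μ) :
    |sg.S u ψ| ≤ √(ip μ (sg.Af u) (sg.Af u)) * √(ip μ ψ ψ) := by
  rw [sg.S_eq_neg_inner u hψ, abs_neg, sg.ip_Af_self, ip_self_eq_norm_sq hψ,
    Real.sqrt_sq (norm_nonneg _), Real.sqrt_sq (norm_nonneg _)]
  exact abs_real_inner_le_norm _ _

lemma S_self_le_Sb {β : ℝ} (hβ : 0 ≤ β) {u : E → ℝ} (hu : MemLp u 2 μ) :
    sg.S u u ≤ sg.Sb β u u :=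
  le_add_of_nonneg_left (mul_nonneg hβ (ip_self_nonneg hu))

lemma S_add_mul_self {u v : E → ℝ} (hu : MemLp u 2 μ) (hv : MemLp v 2 μ)
    (huD : sg.memD u) (hvD : sg.memD v) (c : ℝ) :
    sg.S (fun x => u x + c * v x) (fun x => u x + c * v x)
      = sg.S u u + c * (sg.S u v + sg.S v u) + c ^ 2 * sg.S v v := by
  simp only [sg.S_eq_neg_inner _ (memLp_add_mul hu hv c), sg.S_eq_neg_inner _ hu,
    sg.S_eq_neg_inner _ hv, toL2_add_mul hu hv, sg.gen_add_smul huD hvD, inner_add_left,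
    inner_add_right, real_inner_smul_left, real_inner_smul_right]
  ring

lemma ip_Af_add_mul_le {u v : E → ℝ} (hu : MemLp u 2 μ) (hv : MemLp v 2 μ)
    (huD : sg.memD u) (hvD : sg.memD v) (c : ℝ) :
    ip μ (sg.Af fun x => u x + c * v x) (sg.Af fun x => u x + c * v x)
      ≤ 2 * ip μ (sg.Af u) (sg.Af u) + 2 * c ^ 2 * ip μ (sg.Af v) (sg.Af v) := by
  simp only [ip_Af_self, toL2_add_mul hu hv, sg.gen_add_smul huD hvD]
  set a := sg.gen (toL2 μ u)
  set b := sg.gen (toL2 μ v)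
  have hpar : ‖a + c • b‖ ^ 2 + ‖a - c • b‖ ^ 2 = 2 * ‖a‖ ^ 2 + 2 * ‖c • b‖ ^ 2 := by
    rw [norm_add_sq_real, norm_sub_sq_real]
    ring
  rw [norm_smul, mul_pow, Real.norm_eq_abs, sq_abs] at hpar
  nlinarith [sq_nonneg ‖a - c • b‖]

end Semigroup2

namespace Frame

variable (fr : Frame E)

lemma tendsto_ip_of_mem_F {φ ψ : E → ℝ} (hφ : φ ∈ fr.F) (hψ : ψ ∈ fr.F) :
    Tendsto (fun n => ip (fr.ν n) φ ψ) atTop (𝓝 (ip (fr.ν 0) φ ψ)) := by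
  have hsum : (fun x => φ x + 1 * ψ x) ∈ fr.F := by
    simpa only [one_mul] using fr.F_linear φ hφ ψ hψ 1 1
  have polarization : ∀ n, ip (fr.ν n) φ ψ = (ip (fr.ν n) (fun x => φ x + 1 * ψ x)
      (fun x => φ x + 1 * ψ x) - ip (fr.ν n) φ φ - ip (fr.ν n) ψ ψ) / 2 := fun n => by
    rw [ip_add_mul_self (fr.F_memL2 φ hφ n) (fr.F_memL2 ψ hψ n)]
    ring
  simp only [polarization]
  exact (((fr.F_tendsto _ hsum).sub (fr.F_tendsto φ hφ)).sub (fr.F_tendsto ψ hψ)).div_const 2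

lemma F_subset_C : fr.F ⊆ fr.C := fun φ hφ =>
  ⟨⟨fr.F_measurable φ hφ, fr.F_memL2 φ hφ, fr.F_tendsto φ hφ⟩,
    fun _ _ => ⟨φ, hφ, EventuallyEq.rfl⟩, fun _ hψ => fr.tendsto_ip_of_mem_F hφ hψ⟩

lemma tendsto_ip_sub_self {gs : ℕ → E → ℝ} {g ψ : E → ℝ}
    (hgs : ∀ n, MemLp (gs n) 2 (fr.ν n)) (hg : MemLp g 2 (fr.ν 0)) (hψ : ψ ∈ fr.F)
    (hgs_F : Tendsto (fun n => ip (fr.ν n) (gs n) ψ) atTop (𝓝 (ip (fr.ν 0) g ψ)))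
    (hgs_norm : Tendsto (fun n => ip (fr.ν n) (gs n) (gs n)) atTop (𝓝 (ip (fr.ν 0) g g))) :
    Tendsto (fun n => ip (fr.ν n) (fun x => gs n x - ψ x) (fun x => gs n x - ψ x)) atTop
      (𝓝 (ip (fr.ν 0) (fun x => g x - ψ x) (fun x => g x - ψ x))) := by
  simp only [ip_sub_self (hgs _) (fr.F_memL2 ψ hψ _), ip_sub_self hg (fr.F_memL2 ψ hψ 0)]
  exact (hgs_norm.sub (hgs_F.const_mul 2)).add (fr.F_tendsto ψ hψ)

lemma tendsto_ip_of_bdd_of_strong {fs gs : ℕ → E → ℝ} {f g : E → ℝ}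
    (hfs : ∀ n, MemLp (fs n) 2 (fr.ν n)) (hgs : ∀ n, MemLp (gs n) 2 (fr.ν n))
    (hf : MemLp f 2 (fr.ν 0)) (hgm : Measurable g) (hg : MemLp g 2 (fr.ν 0))
    (hfs_bdd : IsBoundedUnder (· ≤ ·) atTop fun n => ip (fr.ν n) (fs n) (fs n))
    (hfs_F : ∀ ψ ∈ fr.F, Tendsto (fun n => ip (fr.ν n) (fs n) ψ) atTop (𝓝 (ip (fr.ν 0) f ψ)))
    (hgs_F : ∀ ψ ∈ fr.F, Tendsto (fun n => ip (fr.ν n) (gs n) ψ) atTop (𝓝 (ip (fr.ν 0) g ψ)))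
    (hgs_norm : Tendsto (fun n => ip (fr.ν n) (gs n) (gs n)) atTop (𝓝 (ip (fr.ν 0) g g))) :
    Tendsto (fun n => ip (fr.ν n) (fs n) (gs n)) atTop (𝓝 (ip (fr.ν 0) f g)) := by
  obtain ⟨B, hB⟩ := hfs_bdd.eventually_le
  rw [Metric.tendsto_nhds]
  intro δ hδ
  set K := √(max B 0) + √(ip (fr.ν 0) f f)
  set ε := δ / (2 * (K + 1))
  have hK : 0 < K + 1 := by positivity
  have hε : 0 < ε := by positivity
  have hKε : K * ε + ε = δ / 2 := by
    simp only [ε]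
    field_simp
  obtain ⟨ψ, hψ, hgψ⟩ := fr.F_dense g hgm hg (ε ^ 2) (by positivity)
  have hψ2 := fr.F_memL2 ψ hψ
  have hgs_near : ∀ᶠ n in atTop,
      ip (fr.ν n) (fun x => gs n x - ψ x) (fun x => gs n x - ψ x) < ε ^ 2 :=
    (fr.tendsto_ip_sub_self hgs hg hψ (hgs_F ψ hψ) hgs_norm).eventually_lt_const hgψ
  have hfs_near : ∀ᶠ n in atTop, dist (ip (fr.ν n) (fs n) ψ) (ip (fr.ν 0) f ψ) < δ / 2 :=
    Metric.tendsto_nhds.1 (hfs_F ψ hψ) _ (half_pos hδ)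
  have hg_near : |ip (fr.ν 0) f g - ip (fr.ν 0) f ψ| ≤ √(ip (fr.ν 0) f f) * ε :=
    (abs_ip_sub_le hf hg (hψ2 0)).trans <|
      mul_le_mul_of_nonneg_left ((Real.sqrt_lt' hε).2 hgψ).le (Real.sqrt_nonneg _)
  filter_upwards [hB, hgs_near, hfs_near] with n hBn hgs_n hfs_n
  have hgs_n' : |ip (fr.ν n) (fs n) (gs n) - ip (fr.ν n) (fs n) ψ| ≤ √(max B 0) * ε :=
    (abs_ip_sub_le (hfs n) (hgs n) (hψ2 n)).trans <|
      mul_le_mul (Real.sqrt_le_sqrt (hBn.trans (le_max_left _ _)))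
        ((Real.sqrt_lt' hε).2 hgs_n).le (Real.sqrt_nonneg _) (Real.sqrt_nonneg _)
  rw [Real.dist_eq] at hfs_n ⊢
  linarith [abs_sub_le (ip (fr.ν n) (fs n) (gs n)) (ip (fr.ν n) (fs n) ψ) (ip (fr.ν 0) f g),
    abs_sub_le (ip (fr.ν n) (fs n) ψ) (ip (fr.ν 0) f ψ) (ip (fr.ν 0) f g),
    abs_sub_comm (ip (fr.ν 0) f ψ) (ip (fr.ν 0) f g)]

lemma memLp_of_mem_C {φ : E → ℝ} (hφ : φ ∈ fr.C) (n : ℕ) : MemLp φ 2 (fr.ν n) := hφ.1.2.1 n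

lemma tendsto_ip_of_mem_C {φ χ : E → ℝ} (hφ : φ ∈ fr.C) (hχ : χ ∈ fr.C) :
    Tendsto (fun n => ip (fr.ν n) φ χ) atTop (𝓝 (ip (fr.ν 0) φ χ)) := by
  obtain ⟨⟨-, hφ2, hφn⟩, -, hφF⟩ := hφ
  obtain ⟨⟨hχm, hχ2, hχn⟩, -, hχF⟩ := hχ
  exact fr.tendsto_ip_of_bdd_of_strong hφ2 hχ2 (hφ2 0) hχm (hχ2 0) hφn.isBoundedUnder_le hφF
    hχF hχn

lemma add_mul_mem_C {φ χ : E → ℝ} (hφ : φ ∈ fr.C) (hχ : χ ∈ fr.C) (c : ℝ) :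
    (fun x => φ x + c * χ x) ∈ fr.C := by
  have hφχ := fr.tendsto_ip_of_mem_C hφ hχ
  obtain ⟨⟨hφm, hφ2, hφn⟩, hφF, hφw⟩ := hφ
  obtain ⟨⟨hχm, hχ2, hχn⟩, hχF, hχw⟩ := hχ
  refine ⟨⟨hφm.add (hχm.const_mul c), fun n => memLp_add_mul (hφ2 n) (hχ2 n) c, ?_⟩, ?_, ?_⟩
  · simp only [ip_add_mul_self (hφ2 _) (hχ2 _)]
    exact (hφn.add (hφχ.const_mul _)).add (hχn.const_mul _)
  · intro n hn
    obtain ⟨g₁, hg₁, hφg₁⟩ := hφF n hn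
    obtain ⟨g₂, hg₂, hχg₂⟩ := hχF n hn
    refine ⟨fun x => 1 * g₁ x + c * g₂ x, fr.F_linear g₁ hg₁ g₂ hg₂ 1 c, ?_⟩
    filter_upwards [hφg₁, hχg₂] with x h₁ h₂
    rw [h₁, h₂, one_mul]
  · intro ψ hψ
    simp only [ip_add_mul_left (hφ2 _) (hχ2 _) (fr.F_memL2 ψ hψ _)]
    exact (hφw ψ hψ).add ((hχw ψ hψ).const_mul c)

end Frame

lemma Frame.WConv.add_mul {fr : Frame E} {ws vs : ℕ → E → ℝ} {w v : E → ℝ}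
    (hws : ∀ n, MemLp (ws n) 2 (fr.ν n)) (hvs : ∀ n, MemLp (vs n) 2 (fr.ν n))
    (hw : MemLp w 2 (fr.ν 0)) (hv : MemLp v 2 (fr.ν 0))
    (hwc : fr.WConv ws w) (hvc : fr.WConv vs v) (c : ℝ) :
    fr.WConv (fun n x => ws n x + c * vs n x) (fun x => w x + c * v x) := by
  intro ψ hψ
  simp only [ip_add_mul_left (hws _) (hvs _) (fr.memLp_of_mem_C hψ _),
    ip_add_mul_left hw hv (fr.memLp_of_mem_C hψ 0)]
  exact (hwc ψ hψ).add ((hvc ψ hψ).const_mul c)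

lemma isBoundedUnder_S_self {ι : Type*} {l : Filter ι} {μ : ι → Measure E}
    (sg : ∀ i, Semigroup2 (μ i)) {us : ι → E → ℝ} (hus : ∀ i, MemLp (us i) 2 (μ i))
    (hA : IsBoundedUnder (· ≤ ·) l fun i => ip (μ i) ((sg i).Af (us i)) ((sg i).Af (us i)))
    (hnorm : IsBoundedUnder (· ≤ ·) l fun i => ip (μ i) (us i) (us i)) :
    IsBoundedUnder (· ≤ ·) l fun i => (sg i).S (us i) (us i) := by
  obtain ⟨M, hM⟩ := hA.eventually_le
  obtain ⟨B, hB⟩ := hnorm.eventually_le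
  refine isBoundedUnder_of_eventually_le (a := √M * √B) ?_
  filter_upwards [hM, hB] with i hMi hBi
  exact (le_abs_self _).trans <| ((sg i).abs_S_le _ (hus i)).trans <|
    mul_le_mul (Real.sqrt_le_sqrt hMi) (Real.sqrt_le_sqrt hBi) (Real.sqrt_nonneg _)
      (Real.sqrt_nonneg _)

lemma isBoundedUnder_ip_self_of_Sb {ι : Type*} {l : Filter ι} {μ : ι → Measure E}
    (sg : ∀ i, Semigroup2 (μ i)) (hc : ∀ i, (sg i).IsContraction) {us : ι → E → ℝ}
    (hus : ∀ i, MemLp (us i) 2 (μ i)) (huD : ∀ i, (sg i).memD (us i)) {β : ℝ} (hβ : 0 < β)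
    (hbd : IsBoundedUnder (· ≤ ·) l fun i => (sg i).Sb β (us i) (us i)) :
    IsBoundedUnder (· ≤ ·) l fun i => ip (μ i) (us i) (us i) := by
  obtain ⟨M, hM⟩ := hbd.eventually_le
  refine isBoundedUnder_of_eventually_le (a := M / β) (hM.mono fun i hi => ?_)
  rw [le_div_iff₀ hβ]
  unfold Semigroup2.Sb at hi
  linarith [(sg i).S_self_nonneg (hc i) (hus i) (huD i)]

lemma PreConv.quadratic_le_liminf {fr : Frame E} {sg : ∀ n, Semigroup2 (fr.ν n)}
    (hpre : PreConv fr sg) {w v : E → ℝ} (hwm : Measurable w) (hw2 : MemLp w 2 (fr.ν 0))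
    (hwD : (sg 0).memD w) (hvm : Measurable v) (hv2 : MemLp v 2 (fr.ν 0))
    (hvD : (sg 0).memD v) {ws vs : ℕ → E → ℝ} (hws : ∀ n, ws n ∈ fr.C ∧ (sg n).memD (ws n))
    (hvs : ∀ n, vs n ∈ fr.C ∧ (sg n).memD (vs n)) (hwconv : fr.WConv ws w)
    (hvconv : fr.WConv vs v)
    (hwA : ∃ M : ℝ, ∀ n, ip (fr.ν n) ((sg n).Af (ws n)) ((sg n).Af (ws n)) ≤ M)
    (hvA : ∃ M : ℝ, ∀ n, ip (fr.ν n) ((sg n).Af (vs n)) ((sg n).Af (vs n)) ≤ M) (t : ℝ) :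
    (sg 0).S w w + t * ((sg 0).S w v + (sg 0).S v w) + t ^ 2 * (sg 0).S v v
      ≤ liminf (fun n => (sg n).S (ws n) (ws n)
          + t * ((sg n).S (ws n) (vs n) + (sg n).S (vs n) (ws n))
          + t ^ 2 * (sg n).S (vs n) (vs n)) atTop := by
  obtain ⟨Mw, hMw⟩ := hwA
  obtain ⟨Mv, hMv⟩ := hvA
  have hws2 : ∀ n, MemLp (ws n) 2 (fr.ν n) := fun n => fr.memLp_of_mem_C (hws n).1 n
  have hvs2 : ∀ n, MemLp (vs n) 2 (fr.ν n) := fun n => fr.memLp_of_mem_C (hvs n).1 n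
  have hA : ∀ n, ip (fr.ν n) ((sg n).Af fun x => ws n x + t * vs n x)
      ((sg n).Af fun x => ws n x + t * vs n x) ≤ 2 * Mw + 2 * t ^ 2 * Mv := fun n =>
    ((sg n).ip_Af_add_mul_le (hws2 n) (hvs2 n) (hws n).2 (hvs n).2 t).trans <| by
      gcongr
      exacts [hMw n, hMv n]
  have h := (hpre.1 (fun x => w x + t * v x) (hwm.add (hvm.const_mul t))
    (memLp_add_mul hw2 hv2 t) id strictMono_id (fun n x => ws n x + t * vs n x)
    (fun n => ⟨fr.add_mul_mem_C (hws n).1 (hvs n).1 t,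
      (sg n).memD_add_mul (hws2 n) (hvs2 n) (hws n).2 (hvs n).2 t⟩)
    (hwconv.add_mul hws2 hvs2 hw2 hv2 hvconv t) ⟨_, hA⟩).2
  rw [(sg 0).S_add_mul_self hw2 hv2 hwD hvD t] at h
  simpa only [id, (sg _).S_add_mul_self (hws2 _) (hvs2 _) (hws _).2 (hvs _).2 t] using h

lemma PreConv.tendsto_S_self {fr : Frame E} {sg : ∀ n, Semigroup2 (fr.ν n)}
    (hpre : PreConv fr sg) (hc : ∀ n, (sg n).IsContraction) {v : E → ℝ} (hvm : Measurable v)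
    (hv2 : MemLp v 2 (fr.ν 0)) {vs : ℕ → E → ℝ} (hvs : ∀ n, vs n ∈ fr.C ∧ (sg n).memD (vs n))
    (hvconv : fr.SConv vs v)
    (hvA : ∃ M : ℝ, ∀ n, ip (fr.ν n) ((sg n).Af (vs n)) ((sg n).Af (vs n)) ≤ M)
    (hvS : limsup (fun n => (sg n).S (vs n) (vs n)) atTop ≤ (sg 0).S v v) :
    Tendsto (fun n => (sg n).S (vs n) (vs n)) atTop (𝓝 ((sg 0).S v v)) := by
  have hvs2 : ∀ n, MemLp (vs n) 2 (fr.ν n) := fun n => fr.memLp_of_mem_C (hvs n).1 n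
  exact tendsto_of_le_liminf_of_limsup_le
    (hpre.1 v hvm hv2 id strictMono_id vs hvs hvconv.1 hvA).2 hvS
    (isBoundedUnder_S_self sg hvs2 (isBoundedUnder_of hvA) hvconv.2.isBoundedUnder_le)
    (isBoundedUnder_of ⟨0, fun n => (sg n).S_self_nonneg (hc n) (hvs2 n) (hvs n).2⟩)

lemma PreConv.tendsto_S_add_S {fr : Frame E} {sg : ∀ n, Semigroup2 (fr.ν n)}
    (hpre : PreConv fr sg) (hc : ∀ n, (sg n).IsContraction) {w v : E → ℝ}
    (hwm : Measurable w) (hw2 : MemLp w 2 (fr.ν 0)) (hwD : (sg 0).memD w)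
    (hvm : Measurable v) (hv2 : MemLp v 2 (fr.ν 0)) (hvD : (sg 0).memD v)
    {ws vs : ℕ → E → ℝ} (hws : ∀ n, ws n ∈ fr.C ∧ (sg n).memD (ws n))
    (hvs : ∀ n, vs n ∈ fr.C ∧ (sg n).memD (vs n)) (hwconv : fr.WConv ws w)
    (hvconv : fr.WConv vs v)
    (hwA : ∃ M : ℝ, ∀ n, ip (fr.ν n) ((sg n).Af (ws n)) ((sg n).Af (ws n)) ≤ M)
    (hvA : ∃ M : ℝ, ∀ n, ip (fr.ν n) ((sg n).Af (vs n)) ((sg n).Af (vs n)) ≤ M)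
    (hwS : IsBoundedUnder (· ≤ ·) atTop fun n => (sg n).S (ws n) (ws n))
    (hvS : Tendsto (fun n => (sg n).S (vs n) (vs n)) atTop (𝓝 ((sg 0).S v v))) :
    Tendsto (fun n => (sg n).S (ws n) (vs n) + (sg n).S (vs n) (ws n)) atTop
      (𝓝 ((sg 0).S w v + (sg 0).S v w)) := by
  have hws2 : ∀ n, MemLp (ws n) 2 (fr.ν n) := fun n => fr.memLp_of_mem_C (hws n).1 n
  have hvs2 : ∀ n, MemLp (vs n) 2 (fr.ν n) := fun n => fr.memLp_of_mem_C (hvs n).1 n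
  refine tendsto_of_quadratic_le_liminf hwS hvS (fun t => isBoundedUnder_of ⟨0, fun n => ?_⟩)
    (hpre.quadratic_le_liminf hwm hw2 hwD hvm hv2 hvD hws hvs hwconv hvconv hwA hvA)
  rw [← (sg n).S_add_mul_self (hws2 n) (hvs2 n) (hws n).2 (hvs n).2]
  exact (sg n).S_self_nonneg (hc n) (memLp_add_mul (hws2 n) (hvs2 n) t)
    ((sg n).memD_add_mul (hws2 n) (hvs2 n) (hws n).2 (hvs n).2 t)

/-- Lemma 2.5 (b): under the hypotheses of Lemma 2.5 (a), if moreover `β > 0` and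
`limsup_n S_{n,β}(wₙ, wₙ) < ∞`, then `w ∈ D(S)` and
`S_{n,β}(vₙ, wₙ) + S_{n,β}(wₙ, vₙ) → S_β(v, w) + S_β(w, v)`. -/
theorem lemma25b (fr : Frame E) (sg : ∀ n, Semigroup2 (fr.ν n))
    (hcontr : ∀ n, (sg n).IsContraction)
    (hpre : PreConv fr sg)
    (w : E → ℝ) (hwm : Measurable w) (hw2 : MemLp w 2 (fr.ν 0))
    (ws : ℕ → E → ℝ) (hws : ∀ n, ws n ∈ fr.C ∧ (sg n).memD (ws n))
    (hwconv : fr.WConv ws w)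
    (hwA : ∃ M : ℝ, ∀ n, ip (fr.ν n) ((sg n).Af (ws n)) ((sg n).Af (ws n)) ≤ M)
    (v : E → ℝ) (hvm : Measurable v) (hv2 : MemLp v 2 (fr.ν 0)) (hvD : (sg 0).memD v)
    (vs : ℕ → E → ℝ) (hvs : ∀ n, vs n ∈ fr.C ∧ (sg n).memD (vs n))
    (hvconv : fr.SConv vs v)
    (hvA : ∃ M : ℝ, ∀ n, ip (fr.ν n) ((sg n).Af (vs n)) ((sg n).Af (vs n)) ≤ M)
    (hvS : limsup (fun n => (sg n).S (vs n) (vs n)) atTop ≤ (sg 0).S v v)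
    (β : ℝ) (hβ : 0 < β)
    (hbd : IsBoundedUnder (· ≤ ·) atTop (fun n => (sg n).Sb β (ws n) (ws n))) :
    (sg 0).memD w ∧
    Tendsto (fun n => (sg n).Sb β (vs n) (ws n) + (sg n).Sb β (ws n) (vs n)) atTop
      (𝓝 ((sg 0).Sb β v w + (sg 0).Sb β w v)) := by
  have hws2 : ∀ n, MemLp (ws n) 2 (fr.ν n) := fun n => fr.memLp_of_mem_C (hws n).1 n
  have hvs2 : ∀ n, MemLp (vs n) 2 (fr.ν n) := fun n => fr.memLp_of_mem_C (hvs n).1 n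
  have hwD := (hpre.1 w hwm hw2 id strictMono_id ws hws hwconv hwA).1
  refine ⟨hwD, ?_⟩
  have hcross : Tendsto (fun n => ip (fr.ν n) (ws n) (vs n)) atTop (𝓝 (ip (fr.ν 0) w v)) :=
    fr.tendsto_ip_of_bdd_of_strong hws2 hvs2 hw2 hvm hv2
      (isBoundedUnder_ip_self_of_Sb sg hcontr hws2 (fun n => (hws n).2) hβ hbd)
      (fun ψ hψ => hwconv ψ (fr.F_subset_C hψ)) (fun ψ hψ => hvconv.1 ψ (fr.F_subset_C hψ))
      hvconv.2
  have hd : Tendsto (fun n => (sg n).S (ws n) (vs n) + (sg n).S (vs n) (ws n)) atTop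
      (𝓝 ((sg 0).S w v + (sg 0).S v w)) :=
    hpre.tendsto_S_add_S hcontr hwm hw2 hwD hvm hv2 hvD hws hvs hwconv hvconv.1 hwA hvA
      (hbd.mono_le (.of_forall fun n => (sg n).S_self_le_Sb hβ.le (hws2 n)))
      (hpre.tendsto_S_self hcontr hvm hv2 hvs hvconv hvA hvS)
  convert (hcross.const_mul (2 * β)).add hd using 2
  · simp only [Semigroup2.Sb, ip_comm (vs _) (ws _)]
    ring
  · simp only [Semigroup2.Sb, ip_comm v w]
    ring

end Mosco
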